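/- arXiv:math/0403112 — 8 statements merged into one kernel-verified Lean document; each statement's English description precedes it below -/
import Mathlib

section
/- Let B be the 2×2 block operator matrix [[A0, V],[V*, A1]] on H = H0 ⊕ H1, where A0, A1 are bounded self-adjoint operators on H0, H1 respectively, and V : H1 → H0 is bounded. A densely defined (possibly unbounded, not necessarily closed) operator X from H0 to H1 is a strong solution of the Riccati equation A1 X − X A0 − X V X + V* = 0 if and only if the graph subspace G(H0,X) is invariant under B. -/
/-!
At a graph point `(x, X x)`, invariance under `B` says exactly that `A0 x + V X x ∈ Dom X` and
`X (A0 x + V X x) = V* x + A1 X x`, which is the Riccati equation evaluated at `x`.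
-/

section PartialGraph

variable {E F S : Type*} [SetLike S E] {D : S}

def partialGraph (X : D → F) : Set (E × F) := {q | ∃ x : D, q = ((x : E), X x)}

theorem mk_mem_partialGraph_iff (X : D → F) (u : E) (v : F) :
    (u, v) ∈ partialGraph X ↔ ∃ h : u ∈ D, X ⟨u, h⟩ = v := by
  constructor
  · rintro ⟨x, hx⟩
    obtain ⟨rfl, rfl⟩ := Prod.mk.inj hx
    exact ⟨x.2, rfl⟩
  · rintro ⟨h, rfl⟩
    exact ⟨⟨u, h⟩, rfl⟩

theorem mapsTo_partialGraph_iff (X : D → F) (T : E × F → E × F) :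
    Set.MapsTo T (partialGraph X) (partialGraph X) ↔
      ∀ x : D, ∃ h : (T (x, X x)).1 ∈ D, X ⟨_, h⟩ = (T (x, X x)).2 := by
  refine ⟨fun hT x => ?_, ?_⟩
  · exact (mk_mem_partialGraph_iff X _ _).1 (hT ⟨x, rfl⟩)
  · rintro hT _ ⟨x, rfl⟩
    exact (mk_mem_partialGraph_iff X _ _).2 (hT x)

theorem forall_exists_mem_and_apply_eq_iff (X : D → F) (f : D → E) (g : D → F) :
    (∀ x, ∃ h : f x ∈ D, X ⟨f x, h⟩ = g x) ↔
      (∀ x, f x ∈ D) ∧ ∀ x y : D, (y : E) = f x → X y = g x := by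
  constructor
  · intro H
    refine ⟨fun x => (H x).1, fun x y hy => ?_⟩
    obtain ⟨h, hX⟩ := H x
    rwa [show y = ⟨f x, h⟩ from Subtype.ext hy]
  · rintro ⟨hD, hX⟩ x
    exact ⟨hD x, hX x _ rfl⟩

end PartialGraph

open ContinuousLinearMap

theorem riccati_strong_solution_iff_graph_invariant_general
    {H0 H1 : Type*} [NormedAddCommGroup H0] [InnerProductSpace ℂ H0] [CompleteSpace H0]
    [NormedAddCommGroup H1] [InnerProductSpace ℂ H1] [CompleteSpace H1]
    (A0 : H0 →L[ℂ] H0) (A1 : H1 →L[ℂ] H1) (V : H1 →L[ℂ] H0)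
    (Dom : Submodule ℂ H0)
    (X : Dom →ₗ[ℂ] H1) :
    -- `X` is a strong solution of the Riccati equation
    ((∀ x : Dom, A0 (x : H0) + V (X x) ∈ Dom) ∧
      (∀ x y : Dom, (y : H0) = A0 (x : H0) + V (X x) →
        A1 (X x) - X y + (adjoint V) (x : H0) = 0))
    ↔
    -- the graph subspace of `X` is invariant under `B`
    (∀ p ∈ {q : H0 × H1 | ∃ x : Dom, q = ((x : H0), X x)},
      (A0 p.1 + V p.2, (adjoint V) p.1 + A1 p.2)
        ∈ {q : H0 × H1 | ∃ x : Dom, q = ((x : H0), X x)}) := by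
  have riccati_iff (x y : Dom) :
      A1 (X x) - X y + (adjoint V) (x : H0) = 0 ↔ X y = (adjoint V) (x : H0) + A1 (X x) := by
    rw [sub_add_eq_add_sub, sub_eq_zero, eq_comm, add_comm]
  simp only [riccati_iff]
  rw [← forall_exists_mem_and_apply_eq_iff]
  exact (mapsTo_partialGraph_iff X fun p => (A0 p.1 + V p.2, (adjoint V) p.1 + A1 p.2)).symm

/-- A densely defined operator `X : H0 → H1` is a strong solution of the
Riccati equation `A1 X - X A0 - X V X + V* = 0` if and only if its graph subspace
`G(H0,X) = {(x, Xx)}` is invariant under the block operator `B = [[A0, V], [V*, A1]]`. -/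
theorem riccati_strong_solution_iff_graph_invariant
    {H0 H1 : Type*} [NormedAddCommGroup H0] [InnerProductSpace ℂ H0] [CompleteSpace H0]
    [NormedAddCommGroup H1] [InnerProductSpace ℂ H1] [CompleteSpace H1]
    (A0 : H0 →L[ℂ] H0) (A1 : H1 →L[ℂ] H1) (V : H1 →L[ℂ] H0)
    (hA0 : IsSelfAdjoint A0) (hA1 : IsSelfAdjoint A1)
    (Dom : Submodule ℂ H0) (hDomDense : Dense (Dom : Set H0))
    (X : Dom →ₗ[ℂ] H1) :
    -- `X` is a strong solution of the Riccati equation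
    ((∀ x : Dom, A0 (x : H0) + V (X x) ∈ Dom) ∧
      (∀ x y : Dom, (y : H0) = A0 (x : H0) + V (X x) →
        A1 (X x) - X y + (adjoint V) (x : H0) = 0))
    ↔
    -- the graph subspace of `X` is invariant under `B`
    (∀ p ∈ {q : H0 × H1 | ∃ x : Dom, q = ((x : H0), X x)},
      (A0 p.1 + V p.2, (adjoint V) p.1 + A1 p.2)
        ∈ {q : H0 × H1 | ∃ x : Dom, q = ((x : H0), X x)}) :=
  riccati_strong_solution_iff_graph_invariant_general A0 A1 V Dom X
end

section
/- Let H0 be a separable Hilbert space, A0 a bounded self-adjoint operator on H0, and v ∈ H0 a cyclic vector for A0. Let B be the operator on H = H0 ⊕ ℂ given by B(x ⊕ c) = (A0 x + c v) ⊕ (⟨v,x⟩ + a1 c) for a real number a1. Then the vector 0 ⊕ 1 is cyclic for B, hence B has simple spectrum. -/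
/-!
Let `e = 0 ⊕ 1` and `S` the span of its `B`-orbit, a `B`-invariant subspace. Only the first row
of `B` matters: subtracting multiples of `e`, `S` contains `v ⊕ 0` (from `B e`) and, with `w ⊕ 0`,
also `A₀ w ⊕ 0` (from `B (w ⊕ 0)`). So `S ⊇ span {A₀ⁿ v} × ℂ`, which is dense since `v` is cyclic.
-/

open Submodule Set

theorem Module.End.apply_mem_span_range_pow {R M : Type*} [Semiring R] [AddCommMonoid M]
    [Module R M] (f : Module.End R M) (x : M) {y : M}
    (hy : y ∈ span R (range fun n : ℕ => (f ^ n) x)) :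
    f y ∈ span R (range fun n : ℕ => (f ^ n) x) := by
  have hle : span R (range fun n : ℕ => (f ^ n) x) ≤
      (span R (range fun n : ℕ => (f ^ n) x)).comap f := by
    rw [span_le]
    rintro _ ⟨n, rfl⟩
    exact subset_span ⟨n + 1, by simp [pow_succ']⟩
  exact hle hy

theorem ContinuousLinearMap.pow_apply_eq_toLinearMap_pow_apply {R M : Type*} [Semiring R]
    [TopologicalSpace M] [AddCommMonoid M] [Module R M] (T : M →L[R] M) (n : ℕ) (x : M) :
    (T ^ n) x = ((T : Module.End R M) ^ n) x := by
  rw [← ContinuousLinearMap.toLinearMap_pow, ContinuousLinearMap.coe_coe]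

section BlockOperator

variable {R E : Type*} [Ring R] [AddCommGroup E] [Module R E]

theorem pow_apply_inl_mem_of_invariant (A : Module.End R E) (v : E) (B : E × R → E × R)
    (hB : ∀ z, (B z).1 = A z.1 + z.2 • v) (S : Submodule R (E × R))
    (hS : ∀ z ∈ S, B z ∈ S) (h01 : ((0 : E), (1 : R)) ∈ S) (n : ℕ) :
    ((A ^ n) v, (0 : R)) ∈ S := by
  have fst_mem : ∀ z ∈ S, (z.1, (0 : R)) ∈ S := fun ⟨w, c⟩ hz => by
    simpa using S.sub_mem hz (S.smul_mem c h01)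
  induction n with
  | zero => simpa [hB] using fst_mem _ (hS _ h01)
  | succ n ih => simpa [hB, pow_succ'] using fst_mem _ (hS _ ih)

theorem span_prod_univ_subset_of_mem {S : Submodule R (E × R)} {G : Set E}
    (hG : ∀ y ∈ G, (y, (0 : R)) ∈ S) (h01 : ((0 : E), (1 : R)) ∈ S) :
    (span R G : Set E) ×ˢ (univ : Set R) ⊆ S := by
  rintro ⟨y, c⟩ ⟨hy, -⟩
  have hle : span R G ≤ S.comap (LinearMap.inl R E R) := span_le.mpr hG
  simpa using S.add_mem (hle hy) (S.smul_mem c h01)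

end BlockOperator

theorem zero_oplus_one_cyclic_for_block_operator_general
    {H0 : Type*} [NormedAddCommGroup H0] [InnerProductSpace ℂ H0]
    (A0 : H0 →L[ℂ] H0) (v : H0) (a1 : ℝ)
    (hcyc : Dense ((Submodule.span ℂ (Set.range fun n : ℕ => (A0 ^ n) v) : Submodule ℂ H0) : Set H0))
    (B : (H0 × ℂ) →L[ℂ] (H0 × ℂ))
    (hB : ∀ (x : H0) (c : ℂ), B (x, c) = (A0 x + c • v, (inner ℂ v x : ℂ) + (a1 : ℂ) * c)) :
    Dense ((Submodule.span ℂ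
      (Set.range fun n : ℕ => (B ^ n) ((0 : H0), (1 : ℂ))) : Submodule ℂ (H0 × ℂ)) : Set (H0 × ℂ)) := by
  simp only [ContinuousLinearMap.pow_apply_eq_toLinearMap_pow_apply] at hcyc ⊢
  set S := span ℂ (range fun n : ℕ => ((B : Module.End ℂ (H0 × ℂ)) ^ n) ((0 : H0), (1 : ℂ)))
  have h01 : ((0 : H0), (1 : ℂ)) ∈ S := subset_span ⟨0, by simp⟩
  have hS : ∀ z ∈ S, (B : Module.End ℂ (H0 × ℂ)) z ∈ S := fun _ hz =>
    Module.End.apply_mem_span_range_pow (B : Module.End ℂ (H0 × ℂ)) ((0 : H0), (1 : ℂ)) hz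
  have hB_fst : ∀ z : H0 × ℂ,
      ((B : Module.End ℂ (H0 × ℂ)) z).1 = (A0 : Module.End ℂ H0) z.1 + z.2 • v := by
    rintro ⟨x, c⟩
    simp [hB]
  have hpow := pow_apply_inl_mem_of_invariant (A0 : Module.End ℂ H0) v _ hB_fst S hS h01
  refine (hcyc.prod dense_univ).mono (span_prod_univ_subset_of_mem ?_ h01)
  rintro _ ⟨n, rfl⟩
  exact hpow n

/-- If `v` is a cyclic vector for the bounded self-adjoint operator `A0` on a
separable Hilbert space `H0`, and `B` is the block operator `[[A0, v],[⟨v,·⟩, a1]]` on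
`H0 ⊕ ℂ` (with `a1 ∈ ℝ`), then the vector `0 ⊕ 1` is cyclic for `B`. -/
theorem zero_oplus_one_cyclic_for_block_operator
    {H0 : Type*} [NormedAddCommGroup H0] [InnerProductSpace ℂ H0] [CompleteSpace H0]
    [TopologicalSpace.SeparableSpace H0]
    (A0 : H0 →L[ℂ] H0) (hA0 : IsSelfAdjoint A0) (v : H0) (a1 : ℝ)
    (hcyc : Dense ((Submodule.span ℂ (Set.range fun n : ℕ => (A0 ^ n) v) : Submodule ℂ H0) : Set H0))
    (B : (H0 × ℂ) →L[ℂ] (H0 × ℂ))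
    (hB : ∀ (x : H0) (c : ℂ), B (x, c) = (A0 x + c • v, (inner ℂ v x : ℂ) + (a1 : ℂ) * c)) :
    Dense ((Submodule.span ℂ
      (Set.range fun n : ℕ => (B ^ n) ((0 : H0), (1 : ℂ))) : Submodule ℂ (H0 × ℂ)) : Set (H0 × ℂ)) :=
  zero_oplus_one_cyclic_for_block_operator_general A0 v a1 hcyc B hB
end

section
/- Let m be a compactly supported Borel probability measure on ℝ, v ∈ L²(ℝ,m), and a1 ∈ ℝ. Then the function φ(z) = [1 + (a1 − z)·∫ |v(μ)|²/(μ − z) dm(μ)] / [(a1 − z) − ∫ |v(μ)|²/(μ − z) dm(μ)], defined for Im z > 0, is a Herglotz function: it is analytic on the upper half-plane and maps the upper half-plane into itself. -/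
open MeasureTheory Complex

/-!
Write `w = a1 - z` and `G = ∫ |v|² / (μ - z) dm`. The Cauchy transform `G` of the finite measure
`|v|² dm` is holomorphic on the upper half-plane with `Im G ≥ 0`, since
`Im (1 / (μ - z)) = Im z / |μ - z|² ≥ 0`, while `Im w = -Im z < 0`. The identity
`Im ((1 + w G) / (w - G)) · |w - G|² = -Im w · (1 + |G|²) + Im G · (1 + |w|²)`
then makes `φ = (1 + w G) / (w - G)` have positive imaginary part, and its denominator never
vanishes because `Im (w - G) < 0`.
-/

noncomputable def cauchyTransform (m : Measure ℝ) (w : ℝ → ℝ) (z : ℂ) : ℂ :=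
  ∫ x, (w x : ℂ) / ((x : ℂ) - z) ∂m

namespace Complex

lemma im_le_norm_ofReal_sub (x : ℝ) (z : ℂ) : z.im ≤ ‖(x : ℂ) - z‖ :=
  (le_abs_self _).trans (by simpa using abs_im_le_norm ((x : ℂ) - z))

lemma ofReal_sub_ne_zero_of_im_pos (x : ℝ) {z : ℂ} (hz : 0 < z.im) : (x : ℂ) - z ≠ 0 :=
  norm_pos_iff.mp (hz.trans_le (im_le_norm_ofReal_sub x z))

lemma im_ofReal_div_ofReal_sub (a x : ℝ) (z : ℂ) :
    ((a : ℂ) / ((x : ℂ) - z)).im = a * z.im / normSq ((x : ℂ) - z) := by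
  simp [div_im, neg_div]

lemma half_im_lt_im_of_mem_ball {z₀ z : ℂ} (hz : z ∈ Metric.ball z₀ (z₀.im / 2)) :
    z₀.im / 2 < z.im := by
  have h : |z.im - z₀.im| < z₀.im / 2 :=
    (show |z.im - z₀.im| ≤ ‖z - z₀‖ by simpa using abs_im_le_norm (z - z₀)).trans_lt
      (mem_ball_iff_norm.mp hz)
  linarith [(abs_lt.mp h).1]

lemma hasDerivAt_ofReal_div_ofReal_sub (a x : ℝ) {z : ℂ} (hz : (x : ℂ) - z ≠ 0) :
    HasDerivAt (fun z : ℂ => (a : ℂ) / ((x : ℂ) - z)) ((a : ℂ) / ((x : ℂ) - z) ^ 2) z := by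
  have h := (((hasDerivAt_id z).const_sub (x : ℂ)).inv hz).const_mul (a : ℂ)
  simpa [div_eq_mul_inv] using h

lemma sub_ne_zero_of_im_lt_zero_le_im {w G : ℂ} (hw : w.im < 0) (hG : 0 ≤ G.im) :
    w - G ≠ 0 :=
  sub_ne_zero.mpr fun h => (hw.trans_le hG).ne (congrArg im h)

lemma im_one_add_mul_div_sub_pos {w G : ℂ} (hw : w.im < 0) (hG : 0 ≤ G.im) :
    0 < ((1 + w * G) / (w - G)).im := by
  have key : (1 + w * G).im * (w - G).re - (1 + w * G).re * (w - G).im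
      = -w.im * (1 + normSq G) + G.im * (1 + normSq w) := by
    simp only [add_im, add_re, mul_im, mul_re, sub_re, sub_im, one_re, one_im, normSq_apply]
    ring
  rw [div_im, div_sub_div_same, key]
  exact div_pos (by nlinarith [normSq_nonneg G, normSq_nonneg w])
    (normSq_pos.mpr (sub_ne_zero_of_im_lt_zero_le_im hw hG))

end Complex

section CauchyTransform

variable {m : Measure ℝ} {w : ℝ → ℝ}

lemma aestronglyMeasurable_ofReal_div_ofReal_sub_pow (hw : AEStronglyMeasurable w m)
    (z : ℂ) (n : ℕ) : AEStronglyMeasurable (fun x : ℝ => (w x : ℂ) / ((x : ℂ) - z) ^ n) m :=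
  (continuous_ofReal.comp_aestronglyMeasurable hw).div₀
    ((continuous_ofReal.sub continuous_const).pow n).aestronglyMeasurable

lemma norm_ofReal_div_ofReal_sub_pow_le (a x : ℝ) {z : ℂ} {r : ℝ} (hr : 0 < r)
    (hrz : r ≤ z.im) (n : ℕ) : ‖(a : ℂ) / ((x : ℂ) - z) ^ n‖ ≤ ‖a‖ * (1 / r) ^ n := by
  rw [norm_div, norm_pow, norm_real, div_eq_mul_inv, one_div, inv_pow]
  gcongr
  exact hrz.trans (im_le_norm_ofReal_sub x z)

lemma integrable_ofReal_div_ofReal_sub (hw : Integrable w m) {z : ℂ} (hz : 0 < z.im) :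
    Integrable (fun x : ℝ => (w x : ℂ) / ((x : ℂ) - z)) m := by
  refine (hw.norm.mul_const ((1 / z.im) ^ 1)).mono'
    (by simpa using aestronglyMeasurable_ofReal_div_ofReal_sub_pow hw.1 z 1)
    (ae_of_all _ fun x => ?_)
  simpa using norm_ofReal_div_ofReal_sub_pow_le (w x) x hz le_rfl 1

theorem hasDerivAt_cauchyTransform (hw : Integrable w m) {z₀ : ℂ} (hz₀ : 0 < z₀.im) :
    HasDerivAt (cauchyTransform m w) (∫ x, (w x : ℂ) / ((x : ℂ) - z₀) ^ 2 ∂m) z₀ := by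
  have hr : 0 < z₀.im / 2 := by linarith
  refine (hasDerivAt_integral_of_dominated_loc_of_deriv_le
    (F := fun z (x : ℝ) => (w x : ℂ) / ((x : ℂ) - z))
    (F' := fun z (x : ℝ) => (w x : ℂ) / ((x : ℂ) - z) ^ 2) (Metric.ball_mem_nhds z₀ hr)
    (.of_forall fun z => by simpa using aestronglyMeasurable_ofReal_div_ofReal_sub_pow hw.1 z 1)
    (integrable_ofReal_div_ofReal_sub hw hz₀)
    (aestronglyMeasurable_ofReal_div_ofReal_sub_pow hw.1 z₀ 2)
    (ae_of_all _ fun x z hz => ?_) (hw.norm.mul_const ((1 / (z₀.im / 2)) ^ 2))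
    (ae_of_all _ fun x z hz => ?_)).2
  · exact norm_ofReal_div_ofReal_sub_pow_le (w x) x hr (half_im_lt_im_of_mem_ball hz).le 2
  · exact hasDerivAt_ofReal_div_ofReal_sub (w x) x
      (ofReal_sub_ne_zero_of_im_pos x (hr.trans (half_im_lt_im_of_mem_ball hz)))

theorem differentiableOn_cauchyTransform (hw : Integrable w m) :
    DifferentiableOn ℂ (cauchyTransform m w) {z : ℂ | 0 < z.im} :=
  fun _ hz => (hasDerivAt_cauchyTransform hw hz).differentiableAt.differentiableWithinAt

theorem im_cauchyTransform_nonneg (hw : Integrable w m) (hw₀ : 0 ≤ w) {z : ℂ}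
    (hz : 0 < z.im) : 0 ≤ (cauchyTransform m w z).im := by
  rw [cauchyTransform, ← RCLike.im_eq_complex_im,
    ← integral_im (integrable_ofReal_div_ofReal_sub hw hz)]
  refine integral_nonneg fun x => ?_
  rw [Pi.zero_apply, RCLike.im_eq_complex_im, im_ofReal_div_ofReal_sub]
  exact div_nonneg (mul_nonneg (hw₀ x) hz.le) (normSq_nonneg _)

end CauchyTransform

theorem herglotz_function_of_block_operator_general
    (m : Measure ℝ)
    (v : ℝ → ℂ) (hv : MemLp v 2 m) (a1 : ℝ)
    (g φ : ℂ → ℂ)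
    (hg : ∀ z : ℂ, g z = ∫ μ, (‖v μ‖ ^ 2 : ℂ) / ((μ : ℂ) - z) ∂m)
    (hφ : ∀ z : ℂ, φ z = (1 + ((a1 : ℂ) - z) * g z) / (((a1 : ℂ) - z) - g z)) :
    DifferentiableOn ℂ φ {z : ℂ | 0 < z.im} ∧ ∀ z : ℂ, 0 < z.im → 0 < (φ z).im := by
  have hw : Integrable (fun x => ‖v x‖ ^ 2) m := by
    simpa using hv.integrable_norm_pow two_ne_zero
  have hg_eq : g = cauchyTransform m (fun x => ‖v x‖ ^ 2) :=
    funext fun z => by simp [hg, cauchyTransform]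
  have him_a1_sub : ∀ z : ℂ, 0 < z.im → ((a1 : ℂ) - z).im < 0 := fun z hz => by simpa using hz
  have him_g : ∀ z : ℂ, 0 < z.im → 0 ≤ (g z).im := fun z hz =>
    hg_eq ▸ im_cauchyTransform_nonneg hw (fun x => by positivity) hz
  refine ⟨?_, fun z hz => hφ z ▸ im_one_add_mul_div_sub_pos (him_a1_sub z hz) (him_g z hz)⟩
  have hdiff_g : DifferentiableOn ℂ g {z : ℂ | 0 < z.im} :=
    hg_eq ▸ differentiableOn_cauchyTransform hw
  have hdiff_a1_sub : DifferentiableOn ℂ (fun z : ℂ => (a1 : ℂ) - z) {z : ℂ | 0 < z.im} :=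
    (differentiableOn_const _).sub differentiableOn_id
  rw [funext hφ]
  exact ((differentiableOn_const 1).add (hdiff_a1_sub.mul hdiff_g)).div
    (hdiff_a1_sub.sub hdiff_g) fun z hz =>
      sub_ne_zero_of_im_lt_zero_le_im (him_a1_sub z hz) (him_g z hz)

/-- For a compactly supported Borel probability measure `m` on `ℝ`,
`v ∈ L²(ℝ,m)` and `a1 ∈ ℝ`, the function
`φ(z) = (1 + (a1 - z)·∫ |v|²/(μ - z) dm) / ((a1 - z) - ∫ |v|²/(μ - z) dm)`
is a Herglotz function: it is analytic on the open upper half-plane and maps it into itself. -/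
theorem herglotz_function_of_block_operator
    (m : Measure ℝ) [IsProbabilityMeasure m]
    (K : Set ℝ) (hK : IsCompact K) (hmK : m Kᶜ = 0)
    (v : ℝ → ℂ) (hv : MemLp v 2 m) (a1 : ℝ)
    (g φ : ℂ → ℂ)
    (hg : ∀ z : ℂ, g z = ∫ μ, (‖v μ‖ ^ 2 : ℂ) / ((μ : ℂ) - z) ∂m)
    (hφ : ∀ z : ℂ, φ z = (1 + ((a1 : ℂ) - z) * g z) / (((a1 : ℂ) - z) - g z)) :
    DifferentiableOn ℂ φ {z : ℂ | 0 < z.im} ∧ ∀ z : ℂ, 0 < z.im → 0 < (φ z).im :=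
  herglotz_function_of_block_operator_general m v hv a1 g φ hg hφ
end

section
/- Let B be a bounded self-adjoint operator on H = H0 ⊕ ℂ of the form B(x ⊕ c) = (A0 x + c v) ⊕ (⟨v,x⟩ + a1 c), with A0 bounded self-adjoint on H0, v ∈ H0, a1 ∈ ℝ. Define the measure ω(δ) = ⟨v⊕0, E_B(δ)(v⊕0)⟩ + ⟨0⊕1, E_B(δ)(0⊕1)⟩ for Borel sets δ, where E_B is the spectral measure of B. Then for any Borel set δ, ω(δ) = 0 implies E_B(δ) = 0, provided v is cyclic for A0. -/
/-!
As `E δ` is an orthogonal projection, `⟪x, E δ x⟫ = ‖E δ x‖²`, so `ω(δ) = 0` puts both `v ⊕ 0`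
and `0 ⊕ 1` into `ker E δ`. This kernel is closed and, since `E δ` commutes with `B`,
`B`-invariant. Because `B (x ⊕ 0) = A0 x ⊕ ⟪v, x⟫` and `0 ⊕ 1` lies in the kernel, the vectors
`x` with `x ⊕ 0` in the kernel form a closed `A0`-invariant subspace of `H0` containing `v`, which
is all of `H0` by cyclicity. Together with `0 ⊕ 1` this gives `ker E δ = H`.
-/

open ContinuousLinearMap

theorem Submodule.eq_top_of_isClosed_of_invariant {R E : Type*} [Semiring R]
    [TopologicalSpace E] [AddCommMonoid E] [Module R E] {A : E →L[R] E} {v : E}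
    (hcyc : Dense (span R (Set.range fun n : ℕ => (A ^ n) v) : Set E))
    (S : Submodule R E) (hS : IsClosed (S : Set E)) (hv : v ∈ S) (hA : ∀ x ∈ S, A x ∈ S) :
    S = ⊤ := by
  have hpow : ∀ n : ℕ, (A ^ n) v ∈ S := by
    intro n
    induction n with
    | zero => exact hv
    | succ n ih => simpa only [pow_succ', mul_apply_eq_comp] using hA _ ih
  have hspan : span R (Set.range fun n : ℕ => (A ^ n) v) ≤ S :=
    span_le.mpr (Set.range_subset_iff.mpr hpow)
  rw [eq_top_iff']
  intro x
  rw [← SetLike.mem_coe, ← hS.closure_eq]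
  exact closure_mono hspan (hcyc x)

section StarProjection

variable {𝕜 E : Type*} [RCLike 𝕜] [NormedAddCommGroup E] [InnerProductSpace 𝕜 E]
  [CompleteSpace E] {P : E →L[𝕜] E}

theorem IsStarProjection.inner_apply_self (hP : IsStarProjection P) (x : E) :
    inner 𝕜 x (P x) = ((‖P x‖ ^ 2 : ℝ) : 𝕜) := by
  have hPP : P (P x) = P x := by rw [← mul_apply_eq_comp, hP.isIdempotentElem.eq]
  calc inner 𝕜 x (P x) = inner 𝕜 x (P (P x)) := by rw [hPP]
    _ = inner 𝕜 (P x) (P x) := by rw [← adjoint_inner_left, hP.isSelfAdjoint.adjoint_eq]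
    _ = _ := by rw [inner_self_eq_norm_sq_to_K]; norm_cast

theorem IsStarProjection.apply_eq_zero_of_inner_add_inner_eq_zero (hP : IsStarProjection P)
    {x y : E} (h : inner 𝕜 x (P x) + inner 𝕜 y (P y) = 0) : P x = 0 ∧ P y = 0 := by
  rw [hP.inner_apply_self, hP.inner_apply_self, ← RCLike.ofReal_add, RCLike.ofReal_eq_zero,
    add_eq_zero_iff_of_nonneg (by positivity) (by positivity)] at h
  simpa using h

end StarProjection

theorem WithLp.prod_submodule_eq_top_of_invariant {𝕜 E : Type*} [Ring 𝕜] [TopologicalSpace 𝕜]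
    [AddCommGroup E] [TopologicalSpace E] [Module 𝕜 E] {p : ENNReal}
    {A : E →L[𝕜] E} {v : E}
    (hcyc : Dense (Submodule.span 𝕜 (Set.range fun n : ℕ => (A ^ n) v) : Set E))
    {B : WithLp p (E × 𝕜) →ₗ[𝕜] WithLp p (E × 𝕜)}
    (hB : ∀ x, ∃ c : 𝕜, B (toLp p (x, 0)) = toLp p (A x, c))
    (K : Submodule 𝕜 (WithLp p (E × 𝕜))) (hK : IsClosed (K : Set (WithLp p (E × 𝕜))))
    (hKB : ∀ z ∈ K, B z ∈ K) (hv : toLp p (v, 0) ∈ K) (h1 : toLp p (0, 1) ∈ K) :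
    K = ⊤ := by
  let L : E →L[𝕜] WithLp p (E × 𝕜) :=
    (prodContinuousLinearEquiv p 𝕜 E 𝕜).symm.toContinuousLinearMap ∘L inl 𝕜 E 𝕜
  have hL : ∀ x, L x = toLp p (x, 0) := fun _ => rfl
  have hsmul : ∀ c : 𝕜, toLp p ((0 : E), c) = c • toLp p (0, 1) := fun c => by
    rw [← toLp_smul, Prod.smul_mk, smul_zero, smul_eq_mul, mul_one]
  have hcomap : K.comap (L : E →ₗ[𝕜] WithLp p (E × 𝕜)) = ⊤ := by
    refine Submodule.eq_top_of_isClosed_of_invariant hcyc _ (hK.preimage L.continuous) hv ?_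
    intro x hx
    obtain ⟨c, hc⟩ := hB x
    have hLA : L (A x) = B (L x) - c • toLp p (0, 1) := by
      rw [hL, hL, hc, ← hsmul, ← toLp_sub, Prod.mk_sub_mk, sub_zero, sub_self]
    simpa [hLA] using K.sub_mem (hKB _ hx) (K.smul_mem c h1)
  rw [Submodule.eq_top_iff']
  intro z
  have hz : z = L (ofLp z).1 + (ofLp z).2 • toLp p (0, 1) := by
    rw [hL, ← hsmul, ← toLp_add, Prod.mk_add_mk, add_zero, zero_add, toLp_ofLp]
  rw [hz]
  exact K.add_mem (by simpa using hcomap.ge (Submodule.mem_top (x := (ofLp z).1))) (K.smul_mem _ h1)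

theorem omega_zero_implies_spectral_projection_zero_general
    {H0 : Type*} [NormedAddCommGroup H0] [InnerProductSpace ℂ H0] [CompleteSpace H0]
    (A0 : H0 →L[ℂ] H0) (v : H0) (a1 : ℝ)
    (hcyc : Dense ((Submodule.span ℂ (Set.range fun n : ℕ => (A0 ^ n) v) : Submodule ℂ H0) : Set H0))
    (B : WithLp 2 (H0 × ℂ) →L[ℂ] WithLp 2 (H0 × ℂ))
    (hB : ∀ (x : H0) (c : ℂ),
      B ((WithLp.equiv 2 (H0 × ℂ)).symm (x, c)) =
        (WithLp.equiv 2 (H0 × ℂ)).symm (A0 x + c • v, (inner ℂ v x : ℂ) + (a1 : ℂ) * c))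
    (E : Set ℝ → (WithLp 2 (H0 × ℂ) →L[ℂ] WithLp 2 (H0 × ℂ)))
    (hEsa : ∀ s, IsSelfAdjoint (E s)) (hEidem : ∀ s, IsIdempotentElem (E s))
    (hEcomm : ∀ s, Commute (E s) B)
    (δ : Set ℝ)
    (hω : (inner ℂ ((WithLp.equiv 2 (H0 × ℂ)).symm (v, (0 : ℂ)))
            (E δ ((WithLp.equiv 2 (H0 × ℂ)).symm (v, (0 : ℂ)))) : ℂ)
        + (inner ℂ ((WithLp.equiv 2 (H0 × ℂ)).symm ((0 : H0), (1 : ℂ)))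
            (E δ ((WithLp.equiv 2 (H0 × ℂ)).symm ((0 : H0), (1 : ℂ)))) : ℂ) = 0) :
    E δ = 0 := by
  have hP : IsStarProjection (E δ) := ⟨hEidem δ, hEsa δ⟩
  obtain ⟨hv, h1⟩ := hP.apply_eq_zero_of_inner_add_inner_eq_zero hω
  have hker : LinearMap.ker (E δ : WithLp 2 (H0 × ℂ) →ₗ[ℂ] WithLp 2 (H0 × ℂ)) = ⊤ := by
    refine WithLp.prod_submodule_eq_top_of_invariant hcyc (B := B)
      (fun x => ⟨_, by simpa using hB x 0⟩) _ (E δ).isClosed_ker (fun z hz => ?_) hv h1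
    simp only [LinearMap.mem_ker, coe_coe] at hz ⊢
    rw [← mul_apply_eq_comp, (hEcomm δ).eq, mul_apply_eq_comp, hz, map_zero]
  ext z
  simpa using hker.ge (Submodule.mem_top (x := z))

/-- Let `B = [[A0, v],[⟨v,·⟩, a1]]` on `H = H0 ⊕ ℂ`, with `v` cyclic for the
bounded self-adjoint operator `A0`, and let `E_B` be (a projection-valued measure with the
characteristic properties of) the spectral measure of `B`.  If for a Borel set `δ` the scalar
measure `ω(δ) = ⟨v⊕0, E_B(δ)(v⊕0)⟩ + ⟨0⊕1, E_B(δ)(0⊕1)⟩` vanishes, then `E_B(δ) = 0`. -/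
theorem omega_zero_implies_spectral_projection_zero
    {H0 : Type*} [NormedAddCommGroup H0] [InnerProductSpace ℂ H0] [CompleteSpace H0]
    (A0 : H0 →L[ℂ] H0) (hA0 : IsSelfAdjoint A0) (v : H0) (a1 : ℝ)
    (hcyc : Dense ((Submodule.span ℂ (Set.range fun n : ℕ => (A0 ^ n) v) : Submodule ℂ H0) : Set H0))
    (B : WithLp 2 (H0 × ℂ) →L[ℂ] WithLp 2 (H0 × ℂ))
    (hB : ∀ (x : H0) (c : ℂ),
      B ((WithLp.equiv 2 (H0 × ℂ)).symm (x, c)) =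
        (WithLp.equiv 2 (H0 × ℂ)).symm (A0 x + c • v, (inner ℂ v x : ℂ) + (a1 : ℂ) * c))
    (E : Set ℝ → (WithLp 2 (H0 × ℂ) →L[ℂ] WithLp 2 (H0 × ℂ)))
    (hEsa : ∀ s, IsSelfAdjoint (E s)) (hEidem : ∀ s, IsIdempotentElem (E s))
    (hEcomm : ∀ s, Commute (E s) B)
    (δ : Set ℝ) (hδ : MeasurableSet δ)
    (hω : (inner ℂ ((WithLp.equiv 2 (H0 × ℂ)).symm (v, (0 : ℂ)))
            (E δ ((WithLp.equiv 2 (H0 × ℂ)).symm (v, (0 : ℂ)))) : ℂ)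
        + (inner ℂ ((WithLp.equiv 2 (H0 × ℂ)).symm ((0 : H0), (1 : ℂ)))
            (E δ ((WithLp.equiv 2 (H0 × ℂ)).symm ((0 : H0), (1 : ℂ)))) : ℂ) = 0) :
    E δ = 0 :=
  omega_zero_implies_spectral_projection_zero_general A0 v a1 hcyc B hB E hEsa hEidem hEcomm δ hω
end

section
/- Let m be a finite Borel measure on ℝ, v ∈ L²(ℝ,m), λ ∈ ℝ. If the functional X_λ, with domain Dom(X_λ) = {φ ∈ L²(ℝ,m) : lim_{ε→0+} ∫ \overline{v(μ)} φ(μ)/(μ − λ − iε) dm(μ) exists}, and defined by that limit, is bounded on its domain, then ∫ |v(μ)|²/|μ − λ|² dm(μ) < ∞. -/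
/-!
Test the functional against `φ_δ = 1_{|μ - λ| ≥ δ} · v / (μ - λ)`, which lies in `L²(m)`. On the
support of `φ_δ` the kernel `1 / (μ - λ - iε)` is bounded by `1 / δ`, so dominated convergence
shows that `φ_δ` is in the domain of `X_λ`, with `X_λ φ_δ = ∫ conj v · φ_δ / (μ - λ) = ‖φ_δ‖₂²`.
Boundedness gives `‖φ_δ‖₂² ≤ C ‖φ_δ‖₂`, i.e. `∫_{|μ - λ| ≥ δ} |v|² / |μ - λ|² ≤ C²` for every
`δ > 0`, and monotone convergence as `δ → 0` finishes the proof.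
-/

open MeasureTheory Filter Topology Complex
open scoped ENNReal ComplexConjugate

theorem MeasureTheory.sq_toReal_eLpNorm_two {α E : Type*} [MeasurableSpace α] {μ : Measure α}
    [NormedAddCommGroup E] {f : α → E} (hf : AEStronglyMeasurable f μ) :
    (eLpNorm f 2 μ).toReal ^ 2 = ∫ x, ‖f x‖ ^ 2 ∂μ := by
  rw [toReal_eLpNorm hf, lpNorm_eq_integral_norm_rpow_toReal two_ne_zero ENNReal.ofNat_ne_top hf]
  simp only [ENNReal.toReal_ofNat, Real.rpow_two]
  rw [← Real.rpow_natCast, ← Real.rpow_mul (integral_nonneg fun _ => by positivity)]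
  norm_num

theorem lintegral_le_of_forall_setLIntegral_abs_sub_ge_le {m : Measure ℝ} {F : ℝ → ℝ≥0∞}
    {lam : ℝ} (hF : F lam = 0) {B : ℝ≥0∞}
    (hB : ∀ δ > 0, ∫⁻ μ in {μ | δ ≤ |μ - lam|}, F μ ∂m ≤ B) :
    ∫⁻ μ, F μ ∂m ≤ B := by
  set s : ℕ → Set ℝ := fun n => {μ | 1 / (n + 1 : ℝ) ≤ |μ - lam|}
  have hs : Monotone s := fun i j hij μ hμ =>
    (one_div_le_one_div_of_le (by positivity) (by gcongr) : 1 / (j + 1 : ℝ) ≤ 1 / (i + 1)).trans hμ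
  have hsupp : Function.support F ⊆ ⋃ n, s n := fun μ hμ => by
    have hne : μ - lam ≠ 0 := sub_ne_zero.2 fun h => hμ (h ▸ hF)
    obtain ⟨n, hn⟩ := exists_nat_one_div_lt (abs_pos.2 hne)
    exact Set.mem_iUnion.2 ⟨n, hn.le⟩
  rw [← setLIntegral_eq_of_support_subset hsupp, setLIntegral_iUnion_of_directed _ hs.directed_le]
  exact iSup_le fun n => hB _ (by positivity)

theorem tendsto_integral_div_sub_ofReal_mul_I {m : Measure ℝ} {g : ℝ → ℂ} (hg : Integrable g m)
    {lam δ : ℝ} (hδ : 0 < δ) (hg_zero : ∀ μ, |μ - lam| < δ → g μ = 0) :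
    Tendsto (fun ε : ℝ => ∫ μ, g μ / ((μ : ℂ) - lam - ε * I) ∂m) (𝓝 0)
      (𝓝 (∫ μ, g μ / ((μ : ℂ) - lam) ∂m)) := by
  have hre : ∀ (μ ε : ℝ), |μ - lam| ≤ ‖(μ : ℂ) - lam - ε * I‖ := fun μ ε => by
    simpa using abs_re_le_norm ((μ : ℂ) - lam - ε * I)
  refine tendsto_integral_filter_of_dominated_convergence (fun μ => δ⁻¹ * ‖g μ‖)
    (.of_forall fun ε => (hg.aemeasurable.div (by fun_prop)).aestronglyMeasurable)
    (.of_forall fun ε => ?_)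
    (hg.norm.const_mul _) (.of_forall fun μ => ?_)
  · refine .of_forall fun μ => ?_
    rcases lt_or_ge |μ - lam| δ with hμ | hμ
    · simp [hg_zero μ hμ]
    · rw [norm_div, ← div_eq_inv_mul]
      exact div_le_div_of_nonneg_left (norm_nonneg _) hδ (hμ.trans (hre μ ε))
  · rcases lt_or_ge |μ - lam| δ with hμ | hμ
    · simp [hg_zero μ hμ]
    · have hne : (μ : ℂ) - lam ≠ 0 := by
        rw [← ofReal_sub, ofReal_ne_zero, ← abs_pos]; exact hδ.trans_le hμ
      refine tendsto_const_nhds.div ?_ hne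
      have : Continuous fun ε : ℝ => (μ : ℂ) - lam - ε * I := by fun_prop
      simpa using this.tendsto 0

noncomputable def cutoffDiv (v : ℝ → ℂ) (lam δ : ℝ) : ℝ → ℂ :=
  {μ | δ ≤ |μ - lam|}.indicator fun μ => v μ / ((μ : ℂ) - lam)

section cutoffDiv

variable {v : ℝ → ℂ} {lam δ : ℝ}

theorem cutoffDiv_of_le {μ : ℝ} (hμ : δ ≤ |μ - lam|) :
    cutoffDiv v lam δ μ = v μ / ((μ : ℂ) - lam) :=
  Set.indicator_of_mem (s := {μ | δ ≤ |μ - lam|}) hμ _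

theorem cutoffDiv_of_lt {μ : ℝ} (hμ : |μ - lam| < δ) : cutoffDiv v lam δ μ = 0 :=
  Set.indicator_of_notMem (s := {μ | δ ≤ |μ - lam|}) (not_le.2 hμ) _

theorem norm_cutoffDiv_sq (μ : ℝ) :
    ‖cutoffDiv v lam δ μ‖ ^ 2 =
      {μ | δ ≤ |μ - lam|}.indicator (fun μ => ‖v μ‖ ^ 2 / |μ - lam| ^ 2) μ := by
  rcases le_or_gt δ |μ - lam| with hμ | hμ
  · simp [cutoffDiv_of_le hμ, hμ, div_pow, ← ofReal_sub]
  · simp [cutoffDiv_of_lt hμ, hμ.not_ge]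

theorem norm_cutoffDiv_le (hδ : 0 < δ) (μ : ℝ) : ‖cutoffDiv v lam δ μ‖ ≤ δ⁻¹ * ‖v μ‖ := by
  rcases le_or_gt δ |μ - lam| with hμ | hμ
  · rw [cutoffDiv_of_le hμ, norm_div, ← ofReal_sub, norm_real, Real.norm_eq_abs,
      ← div_eq_inv_mul]
    exact div_le_div_of_nonneg_left (norm_nonneg _) hδ hμ
  · rw [cutoffDiv_of_lt hμ, norm_zero]
    positivity

theorem conj_mul_cutoffDiv_div (μ : ℝ) :
    conj (v μ) * cutoffDiv v lam δ μ / ((μ : ℂ) - lam) = ((‖cutoffDiv v lam δ μ‖ ^ 2 : ℝ) : ℂ) := by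
  rcases le_or_gt δ |μ - lam| with hμ | hμ
  · rw [cutoffDiv_of_le hμ, ← ofReal_sub, ofReal_pow, ← conj_mul', map_div₀, conj_ofReal]
    ring
  · simp [cutoffDiv_of_lt hμ]

variable {m : Measure ℝ}

theorem memLp_cutoffDiv {p : ℝ≥0∞} (hv : MemLp v p m) (hδ : 0 < δ) :
    MemLp (cutoffDiv v lam δ) p m :=
  hv.of_le_mul (((hv.1.aemeasurable.div (by fun_prop)).indicator
    (measurableSet_le measurable_const (by fun_prop))).aestronglyMeasurable)
    (.of_forall (norm_cutoffDiv_le hδ))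

theorem tendsto_integral_conj_mul_cutoffDiv (hv : MemLp v 2 m) (hδ : 0 < δ) :
    Tendsto (fun ε : ℝ => ∫ μ, conj (v μ) * cutoffDiv v lam δ μ / ((μ : ℂ) - lam - ε * I) ∂m)
      (𝓝 0) (𝓝 (((eLpNorm (cutoffDiv v lam δ) 2 m).toReal ^ 2 : ℝ) : ℂ)) := by
  have hφ := memLp_cutoffDiv (lam := lam) hv hδ
  have hg : Integrable (fun μ => conj (v μ) * cutoffDiv v lam δ μ) m :=
    hv.star.integrable_mul hφ
  have h := tendsto_integral_div_sub_ofReal_mul_I (lam := lam) hg hδ fun μ hμ => by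
    simp [cutoffDiv_of_lt hμ]
  simp_rw [conj_mul_cutoffDiv_div, integral_complex_ofReal, ← sq_toReal_eLpNorm_two hφ.1] at h
  exact h

theorem setLIntegral_enorm_eq_eLpNorm_cutoffDiv_sq :
    ∫⁻ μ in {μ | δ ≤ |μ - lam|}, ‖‖v μ‖ ^ 2 / |μ - lam| ^ 2‖ₑ ∂m =
      eLpNorm (cutoffDiv v lam δ) 2 m ^ 2 := by
  have h := eLpNorm_nnreal_pow_eq_lintegral (f := cutoffDiv v lam δ) (μ := m) two_ne_zero
  simp only [NNReal.coe_ofNat, ENNReal.rpow_ofNat, ENNReal.coe_ofNat] at h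
  rw [h, ← lintegral_indicator (measurableSet_le measurable_const (by fun_prop))]
  refine lintegral_congr fun μ => ?_
  rw [← enorm_indicator_eq_indicator_enorm, ← norm_cutoffDiv_sq, enorm_pow, enorm_norm]

theorem toReal_eLpNorm_cutoffDiv_le (hv : MemLp v 2 m) (hδ : 0 < δ) {C : ℝ}
    (hC : ∀ (φ : ℝ → ℂ) (L : ℂ), MemLp φ 2 m →
      Tendsto (fun ε : ℝ => ∫ μ, conj (v μ) * φ μ / ((μ : ℂ) - lam - ε * I) ∂m) (𝓝[>] 0) (𝓝 L) →
      ‖L‖ ≤ C * (eLpNorm φ 2 m).toReal) :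
    (eLpNorm (cutoffDiv v lam δ) 2 m).toReal ≤ max C 0 := by
  have h := hC _ _ (memLp_cutoffDiv hv hδ)
    ((tendsto_integral_conj_mul_cutoffDiv hv hδ).mono_left nhdsWithin_le_nhds)
  rw [norm_real, Real.norm_of_nonneg (by positivity)] at h
  nlinarith [(eLpNorm (cutoffDiv v lam δ) 2 m).toReal_nonneg, le_max_left C 0, le_max_right C 0]

end cutoffDiv

theorem X_lambda_bounded_implies_finite_general
    (m : Measure ℝ)
    (v : ℝ → ℂ) (hv : MemLp v 2 m) (lam : ℝ)
    (hbdd : ∃ C : ℝ, ∀ (φ : ℝ → ℂ) (L : ℂ), MemLp φ 2 m →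
      Tendsto
        (fun ε : ℝ => ∫ μ, (starRingEnd ℂ) (v μ) * φ μ / ((μ : ℂ) - (lam : ℂ) - ε * I) ∂m)
        (𝓝[>] 0) (𝓝 L) →
      ‖L‖ ≤ C * (eLpNorm φ 2 m).toReal) :
    Integrable (fun μ : ℝ => ‖v μ‖ ^ 2 / |μ - lam| ^ 2) m := by
  obtain ⟨C, hC⟩ := hbdd
  refine ⟨((hv.1.aemeasurable.norm.pow_const 2).div (by fun_prop)).aestronglyMeasurable,
    lt_of_le_of_lt ?_ (ENNReal.ofReal_lt_top (r := max C 0 ^ 2))⟩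
  -- at `μ = lam` the integrand is the junk value `‖v lam‖ ^ 2 / 0 = 0`
  refine lintegral_le_of_forall_setLIntegral_abs_sub_ge_le (lam := lam) (by simp) fun δ hδ => ?_
  rw [setLIntegral_enorm_eq_eLpNorm_cutoffDiv_sq, ENNReal.ofReal_pow (le_max_right C 0)]
  gcongr
  exact (ENNReal.le_ofReal_iff_toReal_le (memLp_cutoffDiv hv hδ).eLpNorm_ne_top
    (le_max_right C 0)).2 (toReal_eLpNorm_cutoffDiv_le hv hδ hC)

/-- If the functional `X_λ`, defined on its natural domain by the boundary
value `lim_{ε→0+} ∫ conj(v(μ)) φ(μ)/(μ - λ - iε) dm(μ)`, is bounded on its domain, then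
`∫ |v(μ)|²/|μ - λ|² dm(μ) < ∞`. -/
theorem X_lambda_bounded_implies_finite
    (m : Measure ℝ) [IsFiniteMeasure m]
    (v : ℝ → ℂ) (hv : MemLp v 2 m) (lam : ℝ)
    (hbdd : ∃ C : ℝ, ∀ (φ : ℝ → ℂ) (L : ℂ), MemLp φ 2 m →
      Tendsto
        (fun ε : ℝ => ∫ μ, (starRingEnd ℂ) (v μ) * φ μ / ((μ : ℂ) - (lam : ℂ) - ε * I) ∂m)
        (𝓝[>] 0) (𝓝 L) →
      ‖L‖ ≤ C * (eLpNorm φ 2 m).toReal) :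
    Integrable (fun μ : ℝ => ‖v μ‖ ^ 2 / |μ - lam| ^ 2) m :=
  X_lambda_bounded_implies_finite_general m v hv lam hbdd
end

section
/- Let m be a compactly supported Borel measure on ℝ, v ∈ L²(ℝ,m), and λ ∈ ℝ such that the limit ∫ |v(μ)|²/(μ − λ − i0) dm(μ) := lim_{ε→0+} ∫ |v(μ)|²/(μ − λ − iε) dm(μ) exists finitely. Then the set D = {φ : φ(μ) = v(μ)ψ(μ), ψ continuously differentiable on ℝ} is contained in Dom(X_λ); in particular, if v is a cyclic vector for multiplication by the independent variable on L²(ℝ,m), then X_λ is densely defined. -/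
/-!
Split `ψ(μ) = ψ(λ) + (ψ(μ) - ψ(λ))`. The first part contributes `ψ(λ)` times the assumed boundary
value of `∫ |v|² / (μ - λ - iε) dm`. In the second part `ψ` is Lipschitz on the compact support of
`m` together with `λ`, so `|ψ(μ) - ψ(λ)| / |μ - λ - iε| ≤ C` and dominated convergence applies.
The set of `φ` where the boundary value exists is a submodule of `L²(m)` containing every
`μⁿ v = v ψ`, hence it contains their span and is dense when `v` is cyclic.
-/

open MeasureTheory Filter Topology Complex

lemma abs_le_norm_sub_mul_I (μ lam ε : ℝ) :
    |ε| ≤ ‖(μ : ℂ) - lam - ε * I‖ := by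
  simpa using abs_im_le_norm ((μ : ℂ) - lam - ε * I)

lemma abs_sub_le_norm_sub_mul_I (μ lam ε : ℝ) :
    |μ - lam| ≤ ‖(μ : ℂ) - lam - ε * I‖ := by
  simpa using abs_re_le_norm ((μ : ℂ) - lam - ε * I)

lemma ContDiff.exists_norm_sub_le_mul_abs_sub {F : Type*} [NormedAddCommGroup F]
    [NormedSpace ℝ F] {ψ : ℝ → F} (hψ : ContDiff ℝ 1 ψ) {K : Set ℝ} (hK : IsCompact K)
    (lam : ℝ) : ∃ C : ℝ, 0 ≤ C ∧ ∀ μ ∈ K, ‖ψ μ - ψ lam‖ ≤ C * |μ - lam| := by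
  obtain ⟨C, hC⟩ :=
    hψ.locallyLipschitz.locallyLipschitzOn.exists_lipschitzOnWith_of_compact (hK.insert lam)
  refine ⟨C, C.2, fun μ hμ => ?_⟩
  simpa [dist_eq_norm, Real.dist_eq] using
    hC.dist_le_mul μ (Set.mem_insert_of_mem _ hμ) lam (Set.mem_insert _ _)

lemma MeasureTheory.Integrable.div_sub_mul_I {m : Measure ℝ} {f : ℝ → ℂ} (hf : Integrable f m)
    (lam : ℝ) {ε : ℝ} (hε : 0 < ε) :
    Integrable (fun μ => f μ / ((μ : ℂ) - lam - ε * I)) m := by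
  refine (hf.norm.div_const ε).mono'
    (hf.1.aemeasurable.div (by fun_prop)).aestronglyMeasurable (Eventually.of_forall fun μ => ?_)
  rw [norm_div]
  exact div_le_div_of_nonneg_left (norm_nonneg _) hε
    ((le_abs_self ε).trans (abs_le_norm_sub_mul_I μ lam ε))

lemma norm_div_sub_mul_I_le {a : ℂ} {μ lam ε C : ℝ} (hC : 0 ≤ C)
    (ha : ‖a‖ ≤ C * |μ - lam|) : ‖a / ((μ : ℂ) - lam - ε * I)‖ ≤ C := by
  rw [norm_div]
  exact div_le_of_le_mul₀ (norm_nonneg _) hC <|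
    ha.trans (mul_le_mul_of_nonneg_left (abs_sub_le_norm_sub_mul_I μ lam ε) hC)

lemma tendsto_div_sub_mul_I {a : ℂ} {μ lam : ℝ} (ha : μ = lam → a = 0) :
    Tendsto (fun ε : ℝ => a / ((μ : ℂ) - lam - ε * I)) (𝓝 0) (𝓝 (a / ((μ : ℂ) - lam))) := by
  rcases eq_or_ne μ lam with rfl | hne
  · simp [ha rfl]
  refine tendsto_const_nhds.div ?_ (sub_ne_zero.2 (ofReal_injective.ne hne))
  exact Continuous.tendsto' (by fun_prop) 0 _ (by simp)

section
variable {m : Measure ℝ} {ρ ψ : ℝ → ℂ} {lam C : ℝ}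

lemma ae_norm_mul_sub_div_sub_mul_I_le (hC : 0 ≤ C)
    (hlip : ∀ᵐ μ ∂m, ‖ψ μ - ψ lam‖ ≤ C * |μ - lam|) (ε : ℝ) :
    ∀ᵐ μ ∂m, ‖ρ μ * (ψ μ - ψ lam) / ((μ : ℂ) - lam - ε * I)‖ ≤ ‖ρ μ‖ * C := by
  filter_upwards [hlip] with μ hμ
  rw [mul_div_assoc, norm_mul]
  exact mul_le_mul_of_nonneg_left (norm_div_sub_mul_I_le hC hμ) (norm_nonneg _)

lemma integrable_mul_sub_div_sub_mul_I (hρ : Integrable ρ m)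
    (hψ : AEStronglyMeasurable ψ m) (hC : 0 ≤ C)
    (hlip : ∀ᵐ μ ∂m, ‖ψ μ - ψ lam‖ ≤ C * |μ - lam|) (ε : ℝ) :
    Integrable (fun μ => ρ μ * (ψ μ - ψ lam) / ((μ : ℂ) - lam - ε * I)) m :=
  (hρ.norm.mul_const C).mono'
    ((hρ.1.mul (hψ.sub aestronglyMeasurable_const)).aemeasurable.div
      (by fun_prop)).aestronglyMeasurable
    (ae_norm_mul_sub_div_sub_mul_I_le hC hlip ε)

lemma tendsto_integral_mul_sub_div_sub_mul_I (hρ : Integrable ρ m)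
    (hψ : AEStronglyMeasurable ψ m) (hC : 0 ≤ C)
    (hlip : ∀ᵐ μ ∂m, ‖ψ μ - ψ lam‖ ≤ C * |μ - lam|) :
    Tendsto (fun ε : ℝ => ∫ μ, ρ μ * (ψ μ - ψ lam) / ((μ : ℂ) - lam - ε * I) ∂m) (𝓝[>] 0)
      (𝓝 (∫ μ, ρ μ * (ψ μ - ψ lam) / ((μ : ℂ) - lam) ∂m)) := by
  refine tendsto_integral_filter_of_dominated_convergence (fun μ => ‖ρ μ‖ * C)
    (Eventually.of_forall fun ε =>
      (integrable_mul_sub_div_sub_mul_I hρ hψ hC hlip ε).1)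
    (Eventually.of_forall (ae_norm_mul_sub_div_sub_mul_I_le hC hlip))
    (hρ.norm.mul_const C) (Eventually.of_forall fun μ => ?_)
  refine (tendsto_div_sub_mul_I fun h => ?_).mono_left nhdsWithin_le_nhds
  simp [h]

theorem tendsto_integral_mul_div_sub_mul_I (hρ : Integrable ρ m)
    (hψ : AEStronglyMeasurable ψ m) (hC : 0 ≤ C)
    (hlip : ∀ᵐ μ ∂m, ‖ψ μ - ψ lam‖ ≤ C * |μ - lam|) {L : ℂ}
    (hL : Tendsto (fun ε : ℝ => ∫ μ, ρ μ / ((μ : ℂ) - lam - ε * I) ∂m) (𝓝[>] 0) (𝓝 L)) :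
    Tendsto (fun ε : ℝ => ∫ μ, ρ μ * ψ μ / ((μ : ℂ) - lam - ε * I) ∂m) (𝓝[>] 0)
      (𝓝 (ψ lam * L + ∫ μ, ρ μ * (ψ μ - ψ lam) / ((μ : ℂ) - lam) ∂m)) := by
  refine ((hL.const_mul (ψ lam)).add
    (tendsto_integral_mul_sub_div_sub_mul_I hρ hψ hC hlip)).congr' ?_
  filter_upwards [self_mem_nhdsWithin] with ε (hε : 0 < ε)
  rw [← integral_const_mul, ← integral_add
    ((hρ.div_sub_mul_I lam hε).const_mul _)
    (integrable_mul_sub_div_sub_mul_I hρ hψ hC hlip ε)]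
  congr 1 with μ
  ring

end

section
variable {m : Measure ℝ} {v : ℝ → ℂ}

lemma tendsto_integral_conj_mul_mul_div_sub_mul_I {K : Set ℝ} (hK : IsCompact K)
    (hmK : m Kᶜ = 0) (hv : MemLp v 2 m) {lam : ℝ} {L0 : ℂ}
    (hL0 : Tendsto (fun ε : ℝ => ∫ μ, (‖v μ‖ ^ 2 : ℂ) / ((μ : ℂ) - lam - ε * I) ∂m)
      (𝓝[>] 0) (𝓝 L0))
    {ψ : ℝ → ℂ} (hψ : ContDiff ℝ 1 ψ) :
    Tendsto (fun ε : ℝ =>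
        ∫ μ, (starRingEnd ℂ) (v μ) * (v μ * ψ μ) / ((μ : ℂ) - lam - ε * I) ∂m)
      (𝓝[>] 0) (𝓝 (ψ lam * L0 + ∫ μ, (‖v μ‖ ^ 2 : ℂ) * (ψ μ - ψ lam) / ((μ : ℂ) - lam) ∂m)) := by
  obtain ⟨C, hC, hlip⟩ := hψ.exists_norm_sub_le_mul_abs_sub hK lam
  have hρ : Integrable (fun μ => (‖v μ‖ ^ 2 : ℂ)) m :=
    (hv.star.integrable_mul hv).congr (Eventually.of_forall fun μ => conj_mul' (v μ))
  refine (tendsto_integral_mul_div_sub_mul_I hρ hψ.continuous.aestronglyMeasurable hC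
    ((ae_iff.2 hmK).mono hlip) hL0).congr fun ε => ?_
  simp_rw [← mul_assoc, conj_mul']

def domainXLambda (hv : MemLp v 2 m) (lam : ℝ) : Submodule ℂ (Lp ℂ 2 m) where
  carrier := {φ | ∃ L : ℂ, Tendsto
    (fun ε : ℝ => ∫ μ, (starRingEnd ℂ) (v μ) * φ μ / ((μ : ℂ) - (lam : ℂ) - ε * I) ∂m)
    (𝓝[>] 0) (𝓝 L)}
  zero_mem' := by
    refine ⟨0, tendsto_const_nhds.congr fun ε => (integral_eq_zero_of_ae ?_).symm⟩
    filter_upwards [Lp.coeFn_zero ℂ 2 m] with μ hμ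
    rw [hμ, Pi.zero_apply, mul_zero, zero_div]
  add_mem' := by
    rintro φ χ ⟨Lφ, hφ⟩ ⟨Lχ, hχ⟩
    refine ⟨Lφ + Lχ, (hφ.add hχ).congr' ?_⟩
    filter_upwards [self_mem_nhdsWithin] with ε (hε : 0 < ε)
    have hint : ∀ f : Lp ℂ 2 m, Integrable
        (fun μ => (starRingEnd ℂ) (v μ) * f μ / ((μ : ℂ) - lam - ε * I)) m := fun f =>
      (hv.star.integrable_mul (Lp.memLp f)).div_sub_mul_I lam hε
    rw [← integral_add (hint φ) (hint χ)]
    refine integral_congr_ae ?_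
    filter_upwards [Lp.coeFn_add φ χ] with μ hμ
    simp only [hμ, Pi.add_apply]
    ring
  smul_mem' := by
    rintro c φ ⟨L, hφ⟩
    refine ⟨c * L, (hφ.const_mul c).congr fun ε => ?_⟩
    rw [← integral_const_mul]
    refine integral_congr_ae ?_
    filter_upwards [Lp.coeFn_smul c φ] with μ hμ
    simp only [hμ, Pi.smul_apply, smul_eq_mul]
    ring

end

theorem X_lambda_densely_defined_general
    (m : Measure ℝ)
    (K : Set ℝ) (hK : IsCompact K) (hmK : m Kᶜ = 0)
    (v : ℝ → ℂ) (hv : MemLp v 2 m) (lam : ℝ)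
    (hlim : ∃ L0 : ℂ, Tendsto
      (fun ε : ℝ => ∫ μ, (‖v μ‖ ^ 2 : ℂ) / ((μ : ℂ) - (lam : ℂ) - ε * I) ∂m)
      (𝓝[>] 0) (𝓝 L0)) :
    (∀ ψ : ℝ → ℂ, ContDiff ℝ 1 ψ → ∃ L : ℂ, Tendsto
      (fun ε : ℝ =>
        ∫ μ, (starRingEnd ℂ) (v μ) * (v μ * ψ μ) / ((μ : ℂ) - (lam : ℂ) - ε * I) ∂m)
      (𝓝[>] 0) (𝓝 L)) ∧
    (Dense ((Submodule.span ℂ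
        {f : Lp ℂ 2 m | ∃ n : ℕ, ∀ᵐ μ ∂m, f μ = (μ : ℂ) ^ n * v μ} : Submodule ℂ (Lp ℂ 2 m))
          : Set (Lp ℂ 2 m)) →
      Dense {φ : Lp ℂ 2 m | ∃ L : ℂ, Tendsto
        (fun ε : ℝ =>
          ∫ μ, (starRingEnd ℂ) (v μ) * φ μ / ((μ : ℂ) - (lam : ℂ) - ε * I) ∂m)
        (𝓝[>] 0) (𝓝 L)}) := by
  obtain ⟨L0, hL0⟩ := hlim
  refine ⟨fun ψ hψ => ⟨_, tendsto_integral_conj_mul_mul_div_sub_mul_I hK hmK hv hL0 hψ⟩,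
    fun hdense => hdense.mono (Submodule.span_le.2 ?_ : _ ≤ domainXLambda hv lam)⟩
  rintro f ⟨n, hf⟩
  refine ⟨_, (tendsto_integral_conj_mul_mul_div_sub_mul_I hK hmK hv hL0
    (ψ := fun μ : ℝ => (μ : ℂ) ^ n) (ofRealCLM.contDiff.pow n)).congr fun ε =>
      integral_congr_ae ?_⟩
  filter_upwards [hf] with μ hμ
  rw [hμ, mul_comm _ (v μ)]

/-- If the boundary value `∫ |v(μ)|²/(μ - λ - i0) dm(μ)` exists finitely,
then every function of the form `φ = v·ψ` with `ψ` continuously differentiable lies in the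
domain of `X_λ`; in particular, if `v` is cyclic for multiplication by the independent variable
on `L²(ℝ,m)`, then `X_λ` is densely defined. -/
theorem X_lambda_densely_defined
    (m : Measure ℝ) [IsFiniteMeasure m]
    (K : Set ℝ) (hK : IsCompact K) (hmK : m Kᶜ = 0)
    (v : ℝ → ℂ) (hv : MemLp v 2 m) (lam : ℝ)
    (hlim : ∃ L0 : ℂ, Tendsto
      (fun ε : ℝ => ∫ μ, (‖v μ‖ ^ 2 : ℂ) / ((μ : ℂ) - (lam : ℂ) - ε * I) ∂m)
      (𝓝[>] 0) (𝓝 L0)) :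
    (∀ ψ : ℝ → ℂ, ContDiff ℝ 1 ψ → ∃ L : ℂ, Tendsto
      (fun ε : ℝ =>
        ∫ μ, (starRingEnd ℂ) (v μ) * (v μ * ψ μ) / ((μ : ℂ) - (lam : ℂ) - ε * I) ∂m)
      (𝓝[>] 0) (𝓝 L)) ∧
    (Dense ((Submodule.span ℂ
        {f : Lp ℂ 2 m | ∃ n : ℕ, ∀ᵐ μ ∂m, f μ = (μ : ℂ) ^ n * v μ} : Submodule ℂ (Lp ℂ 2 m))
          : Set (Lp ℂ 2 m)) →
      Dense {φ : Lp ℂ 2 m | ∃ L : ℂ, Tendsto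
        (fun ε : ℝ =>
          ∫ μ, (starRingEnd ℂ) (v μ) * φ μ / ((μ : ℂ) - (lam : ℂ) - ε * I) ∂m)
        (𝓝[>] 0) (𝓝 L)}) :=
  X_lambda_densely_defined_general m K hK hmK v hv lam hlim
end

section
/- Let m be a compactly supported Borel measure, v ∈ L²(ℝ,m), a1 ∈ ℝ, and let A0 be multiplication by the independent variable on H0 = L²(ℝ,m), A1 = a1 on H1 = ℂ, V : ℂ → H0 given by V c = c v. Suppose λ ∈ ℝ satisfies a1 − λ = ∫ |v(μ)|²/(μ − λ − i0) dm(μ) (the limit existing finitely). Then the operator X_λ φ = ∫ \overline{v} φ/(μ − λ − i0) dm, with its natural domain, is a strong solution of the Riccati equation A1 X − X A0 − X V X + V* = 0. -/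
open MeasureTheory Filter Topology Complex

/-!
Since `μ / (μ - w) = 1 + w / (μ - w)`, for `w = λ + iε` one has, at every `ε > 0`,
`X_ε((A0 + V X_λ) φ) = ⟨v, φ⟩ + w · X_ε φ + L · X_ε v`. As `ε → 0+` the right side tends to
`⟨v, φ⟩ + λ L + L (a1 - λ)` by the dispersion equation for `λ`, which is the Riccati equation.
Compactness of the support bounds `μ`, so `μ φ` stays in `L²`.
-/

section

variable {m : Measure ℝ}

lemma memLp_top_ofReal_of_isCompact {K : Set ℝ} (hK : IsCompact K) (hmK : m Kᶜ = 0) :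
    MemLp (fun μ : ℝ => (μ : ℂ)) ⊤ m := by
  obtain ⟨C, hC⟩ := hK.isBounded.exists_norm_le
  refine memLp_top_of_bound continuous_ofReal.aestronglyMeasurable C ?_
  filter_upwards [ae_iff.2 hmK] with μ hμ
  simpa using hC μ hμ

lemma integrable_conj_mul {f g : ℝ → ℂ} (hf : MemLp f 2 m) (hg : MemLp g 2 m) :
    Integrable (fun μ => (starRingEnd ℂ) (f μ) * g μ) m :=
  hf.star.integrable_mul hg

lemma ofReal_sub_ne_zero (μ : ℝ) {w : ℂ} (hw : w.im ≠ 0) : (μ : ℂ) - w ≠ 0 := by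
  intro h
  apply hw
  simpa using congrArg Complex.im h

lemma norm_inv_ofReal_sub_le (μ : ℝ) {w : ℂ} (hw : w.im ≠ 0) :
    ‖((μ : ℂ) - w)⁻¹‖ ≤ |w.im|⁻¹ := by
  rw [norm_inv]
  refine inv_anti₀ (abs_pos.2 hw) ?_
  simpa using abs_im_le_norm ((μ : ℂ) - w)

lemma MeasureTheory.Integrable.div_ofReal_sub {f : ℝ → ℂ} (hf : Integrable f m) {w : ℂ}
    (hw : w.im ≠ 0) :
    Integrable (fun μ => f μ / ((μ : ℂ) - w)) m := by
  have hcont : Continuous fun μ : ℝ => ((μ : ℂ) - w)⁻¹ :=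
    (continuous_ofReal.sub continuous_const).inv₀ fun μ => ofReal_sub_ne_zero μ hw
  simpa only [div_eq_mul_inv] using
    hf.mul_bdd hcont.aestronglyMeasurable (.of_forall fun μ => norm_inv_ofReal_sub_le μ hw)

lemma integral_conj_mul_ofReal_mul_add_div_sub {v φ : ℝ → ℂ} (hv : MemLp v 2 m)
    (hφ : MemLp φ 2 m) (L : ℂ) {w : ℂ} (hw : w.im ≠ 0) :
    ∫ μ, (starRingEnd ℂ) (v μ) * (μ * φ μ + L * v μ) / ((μ : ℂ) - w) ∂m =
      (∫ μ, (starRingEnd ℂ) (v μ) * φ μ ∂m)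
        + w * (∫ μ, (starRingEnd ℂ) (v μ) * φ μ / ((μ : ℂ) - w) ∂m)
        + L * ∫ μ, (‖v μ‖ ^ 2 : ℂ) / ((μ : ℂ) - w) ∂m := by
  have hvφ := integrable_conj_mul hv hφ
  have hvv : Integrable (fun μ => (‖v μ‖ ^ 2 : ℂ)) m := by
    simpa only [conj_mul'] using integrable_conj_mul hv hv
  have hpt : ∀ μ : ℝ, (starRingEnd ℂ) (v μ) * (μ * φ μ + L * v μ) / ((μ : ℂ) - w) =
      (starRingEnd ℂ) (v μ) * φ μ + w * ((starRingEnd ℂ) (v μ) * φ μ / ((μ : ℂ) - w))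
        + L * ((‖v μ‖ ^ 2 : ℂ) / ((μ : ℂ) - w)) := by
    intro μ
    rw [← conj_mul']
    field_simp [ofReal_sub_ne_zero μ hw]
    ring
  simp_rw [hpt]
  rw [integral_add, integral_add, integral_const_mul, integral_const_mul]
  exacts [hvφ, (hvφ.div_ofReal_sub hw).const_mul w, hvφ.add ((hvφ.div_ofReal_sub hw).const_mul w),
    (hvv.div_ofReal_sub hw).const_mul L]

end

theorem X_lambda_strong_solution_of_riccati_general
    (m : Measure ℝ)
    (K : Set ℝ) (hK : IsCompact K) (hmK : m Kᶜ = 0)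
    (v : ℝ → ℂ) (hv : MemLp v 2 m) (a1 lam : ℝ)
    (hlim : Tendsto
      (fun ε : ℝ => ∫ μ, (‖v μ‖ ^ 2 : ℂ) / ((μ : ℂ) - (lam : ℂ) - ε * I) ∂m)
      (𝓝[>] 0) (𝓝 ((a1 : ℂ) - (lam : ℂ)))) :
    ∀ (φ : ℝ → ℂ) (L : ℂ), MemLp φ 2 m →
      Tendsto
        (fun ε : ℝ => ∫ μ, (starRingEnd ℂ) (v μ) * φ μ / ((μ : ℂ) - (lam : ℂ) - ε * I) ∂m)
        (𝓝[>] 0) (𝓝 L) →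
      -- `(A0 + V X_λ) φ` again belongs to `L²` and to the domain of `X_λ`, ...
      MemLp (fun μ : ℝ => (μ : ℂ) * φ μ + L * v μ) 2 m ∧
      ∃ L' : ℂ, Tendsto
          (fun ε : ℝ => ∫ μ, (starRingEnd ℂ) (v μ) * ((μ : ℂ) * φ μ + L * v μ) /
            ((μ : ℂ) - (lam : ℂ) - ε * I) ∂m)
          (𝓝[>] 0) (𝓝 L') ∧
        -- ... and the Riccati equation `A1 X φ - X (A0 + V X) φ + V* φ = 0` holds:
        (a1 : ℂ) * L - L' + ∫ μ, (starRingEnd ℂ) (v μ) * φ μ ∂m = 0 := by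
  intro φ L hφ hX
  set P := ∫ μ, (starRingEnd ℂ) (v μ) * φ μ ∂m
  refine ⟨(hφ.smul (memLp_top_ofReal_of_isCompact hK hmK)).add (hv.const_mul L),
    P + a1 * L, ?_, by ring⟩
  have hshift : Tendsto (fun ε : ℝ => (lam : ℂ) + ε * I) (𝓝[>] 0) (𝓝 lam) :=
    ((by fun_prop : Continuous fun ε : ℝ => (lam : ℂ) + ε * I).tendsto' 0 lam
      (by simp)).mono_left nhdsWithin_le_nhds
  have hsum := (tendsto_const_nhds (x := P)).add (hshift.mul hX) |>.add (hlim.const_mul L)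
  rw [show P + lam * L + L * (a1 - lam) = P + a1 * L by ring] at hsum
  refine hsum.congr' ?_
  filter_upwards [self_mem_nhdsWithin] with ε (hε : 0 < ε)
  have hw : ((lam : ℂ) + ε * I).im ≠ 0 := by simpa using hε.ne'
  simp only [sub_sub]
  exact (integral_conj_mul_ofReal_mul_add_div_sub hv hφ L hw).symm

/-- Let `A0` be multiplication by the independent variable on
`H0 = L²(ℝ,m)`, `A1 = a1` on `H1 = ℂ`, `V c = c·v`, and suppose `λ ∈ ℝ` satisfies
`a1 - λ = ∫ |v(μ)|²/(μ - λ - i0) dm(μ)` (the boundary value existing finitely).  Then the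
functional `X_λ φ = ∫ conj(v) φ/(μ - λ - i0) dm`, on its natural domain, is a strong solution
of the Riccati equation `A1 X - X A0 - X V X + V* = 0`: the domain is invariant under
`A0 + V X_λ`, and `a1·X_λ φ - X_λ((A0 + V X_λ)φ) + ⟨v, φ⟩ = 0` on the domain. -/
theorem X_lambda_strong_solution_of_riccati
    (m : Measure ℝ) [IsFiniteMeasure m]
    (K : Set ℝ) (hK : IsCompact K) (hmK : m Kᶜ = 0)
    (v : ℝ → ℂ) (hv : MemLp v 2 m) (a1 lam : ℝ)
    (hlim : Tendsto
      (fun ε : ℝ => ∫ μ, (‖v μ‖ ^ 2 : ℂ) / ((μ : ℂ) - (lam : ℂ) - ε * I) ∂m)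
      (𝓝[>] 0) (𝓝 ((a1 : ℂ) - (lam : ℂ)))) :
    ∀ (φ : ℝ → ℂ) (L : ℂ), MemLp φ 2 m →
      Tendsto
        (fun ε : ℝ => ∫ μ, (starRingEnd ℂ) (v μ) * φ μ / ((μ : ℂ) - (lam : ℂ) - ε * I) ∂m)
        (𝓝[>] 0) (𝓝 L) →
      -- `(A0 + V X_λ) φ` again belongs to `L²` and to the domain of `X_λ`, ...
      MemLp (fun μ : ℝ => (μ : ℂ) * φ μ + L * v μ) 2 m ∧
      ∃ L' : ℂ, Tendsto
          (fun ε : ℝ => ∫ μ, (starRingEnd ℂ) (v μ) * ((μ : ℂ) * φ μ + L * v μ) /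
            ((μ : ℂ) - (lam : ℂ) - ε * I) ∂m)
          (𝓝[>] 0) (𝓝 L') ∧
        -- ... and the Riccati equation `A1 X φ - X (A0 + V X) φ + V* φ = 0` holds:
        (a1 : ℂ) * L - L' + ∫ μ, (starRingEnd ℂ) (v μ) * φ μ ∂m = 0 :=
  X_lambda_strong_solution_of_riccati_general m K hK hmK v hv a1 lam hlim
end

section
/- Let m be a finite Borel measure on ℝ, v ∈ L²(ℝ,m), and λ1 ≠ λ2 real numbers such that both functionals X_{λ1} and X_{λ2} (boundary values of the Cauchy transform against \overline{v}) are densely defined. If v ≠ 0 in L²(ℝ,m), then X_{λ1} ≠ X_{λ2}; consequently the map λ ↦ G(H0, X_λ) from such λ to subspaces of L²(ℝ,m) ⊕ ℂ is injective. -/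
/-!
Suppose the graphs of `X_{λ₁}` and `X_{λ₂}` coincide. Testing with the indicator of `{λ₁}` gives
a pair in the graph of `X_{λ₂}` (no singularity there), while at `λ₁` the integrals behave like
`m{λ₁} · conj v(λ₁) / (-iε)`; so `v` vanishes `m`-a.e. at `λ₁`, and likewise at `λ₂`.
Next test with `φ = v (μ - λ₁)(μ - λ₂)/(1 + μ²)`: at `λ = λⱼ` the factor `μ - λⱼ` cancels the
kernel, and dominated convergence gives `X_{λ₁} φ = ∫ |v|² (μ - λ₂)/(1 + μ²) dm` and
`X_{λ₂} φ = ∫ |v|² (μ - λ₁)/(1 + μ²) dm`. Their difference is `(λ₁ - λ₂) ∫ |v|²/(1 + μ²) dm`,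
which must vanish, so `v = 0` a.e.
-/

open MeasureTheory Filter Topology Complex ComplexConjugate

/-- The graph `G(H0, X_λ)` of the boundary-value functional `X_λ`, as a subset of `L²(m) × ℂ`. -/
def boundaryGraph (m : Measure ℝ) (v : ℝ → ℂ) (lam : ℝ) : Set (Lp ℂ 2 m × ℂ) :=
  {p | Tendsto (fun ε : ℝ => ∫ μ, conj (v μ) * p.1 μ / ((μ : ℂ) - (lam : ℂ) - ε * I) ∂m)
    (𝓝[>] 0) (𝓝 p.2)}

theorem eq_zero_of_tendsto_div {𝕜 : Type*} [Field 𝕜] [TopologicalSpace 𝕜] [IsTopologicalRing 𝕜]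
    [T2Space 𝕜] {α : Type*} {l : Filter α} [l.NeBot] {f : α → 𝕜} {K L : 𝕜}
    (hf : Tendsto f l (𝓝 0)) (hf0 : ∀ᶠ x in l, f x ≠ 0)
    (h : Tendsto (fun x => K / f x) l (𝓝 L)) : K = 0 := by
  have hK : Tendsto (fun x => K / f x * f x) l (𝓝 (L * 0)) := h.mul hf
  rw [mul_zero] at hK
  exact tendsto_nhds_unique
    (tendsto_const_nhds.congr' (hf0.mono fun x hx => (div_mul_cancel₀ K hx).symm)) hK

theorem tendsto_sub_ofReal_mul_I (c : ℂ) :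
    Tendsto (fun ε : ℝ => c - ε * I) (𝓝[>] 0) (𝓝 c) := by
  have : Continuous (fun ε : ℝ => c - ε * I) := by fun_prop
  simpa using this.continuousWithinAt.tendsto (x := 0) (s := Set.Ioi 0)

theorem norm_ofReal_div_sub_mul_I_le_one (x ε : ℝ) : ‖(x : ℂ) / (x - ε * I)‖ ≤ 1 := by
  rw [norm_div]
  refine div_le_one_of_le₀ ?_ (norm_nonneg _)
  calc ‖(x : ℂ)‖ = |((x : ℂ) - ε * I).re| := by simp
    _ ≤ ‖(x : ℂ) - ε * I‖ := Complex.abs_re_le_norm _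

theorem abs_sub_div_one_add_sq_le (x b : ℝ) : |(x - b) / (1 + x ^ 2)| ≤ 1 + |b| := by
  have hx : |x| ≤ 1 + x ^ 2 := by nlinarith [sq_abs x, sq_nonneg (|x| - 1)]
  rw [abs_div, abs_of_pos (by positivity : (0 : ℝ) < 1 + x ^ 2), div_le_iff₀ (by positivity)]
  nlinarith [abs_sub x b, abs_nonneg b, sq_nonneg x, mul_nonneg (abs_nonneg b) (sq_nonneg x)]

theorem abs_sub_mul_sub_div_one_add_sq_le (x a b : ℝ) :
    |(x - a) * (x - b) / (1 + x ^ 2)| ≤ (1 + |a|) * (1 + |b|) := by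
  have hx : |x| ≤ 1 + x ^ 2 := by nlinarith [sq_abs x, sq_nonneg (|x| - 1)]
  have hab : |x - a| * |x - b| ≤ (|x| + |a|) * (|x| + |b|) :=
    mul_le_mul (abs_sub x a) (abs_sub x b) (abs_nonneg _) (by positivity)
  rw [abs_div, abs_mul, abs_of_pos (by positivity : (0 : ℝ) < 1 + x ^ 2),
    div_le_iff₀ (by positivity)]
  nlinarith [sq_abs x, abs_nonneg a, abs_nonneg b, abs_nonneg x,
    mul_nonneg (abs_nonneg a) (abs_nonneg b), mul_nonneg (abs_nonneg a) (sq_nonneg x),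
    mul_nonneg (abs_nonneg b) (sq_nonneg x),
    mul_nonneg (mul_nonneg (abs_nonneg a) (abs_nonneg b)) (sq_nonneg x)]

theorem integral_mul_indicator_singleton {α : Type*} [MeasurableSpace α]
    [MeasurableSingletonClass α] {m : Measure α} (g : α → ℂ) (a : α) :
    ∫ x, g x * ({a} : Set α).indicator (fun _ => (1 : ℂ)) x ∂m = m.real {a} • g a := by
  rw [← integral_singleton, ← integral_indicator (measurableSet_singleton a)]
  congr 1 with x
  by_cases hx : x = a <;> simp [hx]

section BoundaryGraph

variable {m : Measure ℝ} {v : ℝ → ℂ}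

theorem tendsto_integral_mul_sub_div {g : ℝ → ℂ} (hg : Integrable g m) {c : ℝ}
    (hc : ∀ᵐ μ ∂m, μ = c → g μ = 0) :
    Tendsto (fun ε : ℝ => ∫ μ, g μ * ((μ : ℂ) - c) / ((μ : ℂ) - c - ε * I) ∂m) (𝓝[>] 0)
      (𝓝 (∫ μ, g μ ∂m)) := by
  simp_rw [mul_div_assoc]
  refine tendsto_integral_filter_of_dominated_convergence (fun μ => ‖g μ‖)
    (.of_forall fun ε => ?_) (.of_forall fun ε => .of_forall fun μ => ?_) hg.norm ?_
  · exact hg.aestronglyMeasurable.mul (by fun_prop :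
      Measurable fun μ : ℝ => ((μ : ℂ) - c) / ((μ : ℂ) - c - ε * I)).aestronglyMeasurable
  · rw [norm_mul]
    exact mul_le_of_le_one_right (norm_nonneg _)
      (by simpa using norm_ofReal_div_sub_mul_I_le_one (μ - c) ε)
  · filter_upwards [hc] with μ hμ
    by_cases hμc : μ = c
    · simp [hμ hμc]
    · have hne : (μ : ℂ) - c ≠ 0 := sub_ne_zero.2 (by exact_mod_cast hμc)
      simpa [div_self hne] using (tendsto_const_nhds (x := g μ)).mul
        ((tendsto_const_nhds (x := (μ : ℂ) - c)).div (tendsto_sub_ofReal_mul_I _) hne)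

theorem toLp_mem_boundaryGraph_iff {f : ℝ → ℂ} (hf : MemLp f 2 m) {c : ℝ} {L : ℂ} :
    (hf.toLp f, L) ∈ boundaryGraph m v c ↔
      Tendsto (fun ε : ℝ => ∫ μ, conj (v μ) * f μ / ((μ : ℂ) - c - ε * I) ∂m) (𝓝[>] 0)
        (𝓝 L) := by
  refine tendsto_congr fun ε => integral_congr_ae ?_
  filter_upwards [hf.coeFn_toLp] with μ hμ
  rw [hμ]

theorem ae_imp_eq_zero_of_boundaryGraph_subset [IsFiniteMeasure m] {a b : ℝ} (hab : a ≠ b)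
    (h : boundaryGraph m v b ⊆ boundaryGraph m v a) : ∀ᵐ μ ∂m, μ = a → v μ = 0 := by
  have hψ := memLp_indicator_const 2 (measurableSet_singleton a) (1 : ℂ)
    (Or.inr (measure_ne_top m {a}))
  have hint (c ε : ℝ) : ∫ μ, conj (v μ) * ({a} : Set ℝ).indicator (fun _ => (1 : ℂ)) μ /
      ((μ : ℂ) - c - ε * I) ∂m = m.real {a} • (conj (v a) / ((a : ℂ) - c - ε * I)) := by
    simp_rw [mul_div_right_comm]
    exact integral_mul_indicator_singleton _ a
  have hab' : (a : ℂ) - b ≠ 0 := sub_ne_zero.2 (by exact_mod_cast hab)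
  have hb : (hψ.toLp _, m.real {a} • (conj (v a) / ((a : ℂ) - b))) ∈ boundaryGraph m v b := by
    rw [toLp_mem_boundaryGraph_iff, tendsto_congr (hint b)]
    exact (tendsto_const_nhds.div (tendsto_sub_ofReal_mul_I _) hab').const_smul _
  have ha := h hb
  rw [toLp_mem_boundaryGraph_iff, tendsto_congr (hint a)] at ha
  simp_rw [sub_self, ← smul_div_assoc] at ha
  have hε : ∀ᶠ ε : ℝ in 𝓝[>] 0, (0 : ℂ) - ε * I ≠ 0 := by
    filter_upwards [self_mem_nhdsWithin] with ε hε
    simpa using (hε : (0 : ℝ) < ε).ne'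
  rcases smul_eq_zero.1 (eq_zero_of_tendsto_div (tendsto_sub_ofReal_mul_I 0) hε ha) with h0 | h0
  · filter_upwards [measure_eq_zero_iff_ae_notMem.1 ((measureReal_eq_zero_iff).1 h0)]
      with μ hμ hμa
    exact absurd hμa hμ
  · exact .of_forall fun μ hμ => by simpa [hμ] using h0

noncomputable def testFn (v : ℝ → ℂ) (a b : ℝ) (μ : ℝ) : ℂ :=
  v μ * (((μ - a) * (μ - b) / (1 + μ ^ 2) : ℝ) : ℂ)

theorem testFn_comm (v : ℝ → ℂ) (a b : ℝ) : testFn v a b = testFn v b a := by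
  ext μ; simp only [testFn, mul_comm (μ - a)]

theorem memLp_testFn (hv : MemLp v 2 m) (a b : ℝ) : MemLp (testFn v a b) 2 m := by
  refine hv.of_le_mul (c := (1 + |a|) * (1 + |b|)) (hv.1.mul (by fun_prop :
      Measurable fun μ : ℝ => (((μ - a) * (μ - b) / (1 + μ ^ 2) : ℝ) : ℂ)).aestronglyMeasurable)
    (.of_forall fun μ => ?_)
  rw [testFn, norm_mul, mul_comm, Complex.norm_real, Real.norm_eq_abs]
  exact mul_le_mul_of_nonneg_right (abs_sub_mul_sub_div_one_add_sq_le μ a b) (norm_nonneg _)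

theorem integrable_norm_sq_mul (hv : MemLp v 2 m) {w : ℝ → ℝ} (hw : Measurable w) {C : ℝ}
    (hC : ∀ x, |w x| ≤ C) : Integrable (fun μ => ‖v μ‖ ^ 2 * w μ) m :=
  hv.norm.integrable_sq.mul_bdd hw.aestronglyMeasurable (.of_forall hC)

theorem toLp_testFn_mem_boundaryGraph_left (hv : MemLp v 2 m) {a : ℝ} (b : ℝ)
    (ha : ∀ᵐ μ ∂m, μ = a → v μ = 0) :
    ((memLp_testFn hv a b).toLp _, ((∫ μ, ‖v μ‖ ^ 2 * ((μ - b) / (1 + μ ^ 2)) ∂m : ℝ) : ℂ)) ∈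
      boundaryGraph m v a := by
  have hg := (integrable_norm_sq_mul hv (by fun_prop) (abs_sub_div_one_add_sq_le · b)).ofReal
    (𝕜 := ℂ)
  rw [toLp_mem_boundaryGraph_iff, ← integral_complex_ofReal]
  refine (tendsto_integral_mul_sub_div hg (c := a) ?_).congr fun ε =>
    integral_congr_ae (.of_forall fun μ => ?_)
  · filter_upwards [ha] with μ hμ hμa
    simp [hμ hμa]
  · simp only [testFn]
    push_cast
    linear_combination -(((μ : ℂ) - b) / (1 + (μ : ℂ) ^ 2) * ((μ : ℂ) - a) /
      ((μ : ℂ) - a - ε * I)) * Complex.conj_mul' (v μ)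

theorem toLp_testFn_mem_boundaryGraph_right (hv : MemLp v 2 m) (a : ℝ) {b : ℝ}
    (hb : ∀ᵐ μ ∂m, μ = b → v μ = 0) :
    ((memLp_testFn hv a b).toLp _, ((∫ μ, ‖v μ‖ ^ 2 * ((μ - a) / (1 + μ ^ 2)) ∂m : ℝ) : ℂ)) ∈
      boundaryGraph m v b := by
  rw [MemLp.toLp_congr _ (memLp_testFn hv b a) (by rw [testFn_comm])]
  exact toLp_testFn_mem_boundaryGraph_left hv a hb

theorem ae_eq_zero_of_integral_norm_sq_mul_eq (hv : MemLp v 2 m) {a b : ℝ} (hab : a ≠ b)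
    (h : ∫ μ, ‖v μ‖ ^ 2 * ((μ - b) / (1 + μ ^ 2)) ∂m =
      ∫ μ, ‖v μ‖ ^ 2 * ((μ - a) / (1 + μ ^ 2)) ∂m) :
    v =ᵐ[m] 0 := by
  have hint (c : ℝ) := integrable_norm_sq_mul hv (by fun_prop) (abs_sub_div_one_add_sq_le · c)
  have hw (x : ℝ) : |1 / (1 + x ^ 2)| ≤ 1 := by
    rw [abs_of_pos (by positivity)]
    exact div_le_one_of_le₀ (by nlinarith) (by positivity)
  have h0 : ∫ μ, ‖v μ‖ ^ 2 * (1 / (1 + μ ^ 2)) ∂m = 0 := by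
    have hsub : ∫ μ, (a - b) * (‖v μ‖ ^ 2 * (1 / (1 + μ ^ 2))) ∂m = 0 := by
      rw [← sub_eq_zero.2 h, ← integral_sub (hint b) (hint a)]
      congr 1 with μ
      field_simp
      ring
    rwa [integral_const_mul, mul_eq_zero, or_iff_right (sub_ne_zero.2 hab)] at hsub
  filter_upwards [(integral_eq_zero_iff_of_nonneg (fun μ => by positivity)
    (integrable_norm_sq_mul hv (by fun_prop) hw)).1 h0] with μ hμ
  simpa [(by positivity : (1 + μ ^ 2) ≠ 0)] using hμ

end BoundaryGraph

theorem X_lambda_injective_general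
    (m : Measure ℝ) [IsFiniteMeasure m]
    (v : ℝ → ℂ) (hv : MemLp v 2 m) (lam1 lam2 : ℝ) (hne : lam1 ≠ lam2)
    (hvne : ¬ v =ᵐ[m] 0) :
    -- the graphs of `X_{λ1}` and `X_{λ2}` are different subspaces:
    {p : Lp ℂ 2 m × ℂ | Tendsto
        (fun ε : ℝ => ∫ μ, (starRingEnd ℂ) (v μ) * p.1 μ / ((μ : ℂ) - (lam1 : ℂ) - ε * I) ∂m)
        (𝓝[>] 0) (𝓝 p.2)}
      ≠ {p : Lp ℂ 2 m × ℂ | Tendsto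
        (fun ε : ℝ => ∫ μ, (starRingEnd ℂ) (v μ) * p.1 μ / ((μ : ℂ) - (lam2 : ℂ) - ε * I) ∂m)
        (𝓝[>] 0) (𝓝 p.2)} := by
  change boundaryGraph m v lam1 ≠ boundaryGraph m v lam2
  intro h
  have h1 := toLp_testFn_mem_boundaryGraph_left hv lam2
    (ae_imp_eq_zero_of_boundaryGraph_subset hne h.symm.subset)
  have h2 := toLp_testFn_mem_boundaryGraph_right hv lam1
    (ae_imp_eq_zero_of_boundaryGraph_subset hne.symm h.subset)
  rw [h] at h1
  exact hvne (ae_eq_zero_of_integral_norm_sq_mul_eq hv hne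
    (ofReal_injective (tendsto_nhds_unique h1 h2)))

/-- If `λ1 ≠ λ2` and both boundary-value functionals `X_{λ1}`, `X_{λ2}` are
densely defined, and `v ≠ 0` in `L²(ℝ,m)`, then `X_{λ1} ≠ X_{λ2}` (as operators, i.e. as graphs);
consequently `λ ↦ G(H0, X_λ)` is injective. -/
theorem X_lambda_injective
    (m : Measure ℝ) [IsFiniteMeasure m]
    (v : ℝ → ℂ) (hv : MemLp v 2 m) (lam1 lam2 : ℝ) (hne : lam1 ≠ lam2)
    (hdense1 : Dense {φ : Lp ℂ 2 m | ∃ L : ℂ, Tendsto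
      (fun ε : ℝ => ∫ μ, (starRingEnd ℂ) (v μ) * φ μ / ((μ : ℂ) - (lam1 : ℂ) - ε * I) ∂m)
      (𝓝[>] 0) (𝓝 L)})
    (hdense2 : Dense {φ : Lp ℂ 2 m | ∃ L : ℂ, Tendsto
      (fun ε : ℝ => ∫ μ, (starRingEnd ℂ) (v μ) * φ μ / ((μ : ℂ) - (lam2 : ℂ) - ε * I) ∂m)
      (𝓝[>] 0) (𝓝 L)})
    (hvne : ¬ v =ᵐ[m] 0) :
    -- the graphs of `X_{λ1}` and `X_{λ2}` are different subspaces: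
    {p : Lp ℂ 2 m × ℂ | Tendsto
        (fun ε : ℝ => ∫ μ, (starRingEnd ℂ) (v μ) * p.1 μ / ((μ : ℂ) - (lam1 : ℂ) - ε * I) ∂m)
        (𝓝[>] 0) (𝓝 p.2)}
      ≠ {p : Lp ℂ 2 m × ℂ | Tendsto
        (fun ε : ℝ => ∫ μ, (starRingEnd ℂ) (v μ) * p.1 μ / ((μ : ℂ) - (lam2 : ℂ) - ε * I) ∂m)
        (𝓝[>] 0) (𝓝 p.2)} :=
  X_lambda_injective_general m v hv lam1 lam2 hne hvne
end
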